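/- arXiv:2003.05391 — 2 statements merged into one kernel-verified Lean document; each statement's English description precedes it below -/
import Mathlib

section
/- Let S be a nearly Gorenstein numerical semigroup with minimal generators n_1 < ... < n_ν and NG-vector (f_1, ..., f_ν). If i is the minimum index with f_i ≠ F(S), then f_i = F(S) - n_i + n_l for some index l < i. -/
/-- A numerical semigroup: a subset of ℕ containing 0, closed under addition,
with finite complement. -/
def IsNumSgp (S : Set ℕ) : Prop :=
  0 ∈ S ∧ (∀ a ∈ S, ∀ b ∈ S, a + b ∈ S) ∧ (Sᶜ : Set ℕ).Finite

/-- An integer belongs to (the image in ℤ of) S. -/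
def memZ (S : Set ℕ) (z : ℤ) : Prop := ∃ s ∈ S, (s : ℤ) = z

/-- F is the Frobenius number of S: the largest natural number not in S. -/
def IsFrob (S : Set ℕ) (F : ℕ) : Prop := F ∉ S ∧ ∀ n, F < n → n ∈ S

/-- The set of pseudo-Frobenius numbers of S. -/
def PF (S : Set ℕ) : Set ℕ := {f | f ∉ S ∧ ∀ s ∈ S, s ≠ 0 → f + s ∈ S}

/-- n is a minimal generator of S. -/
def IsMinGen (S : Set ℕ) (n : ℕ) : Prop :=
  n ∈ S ∧ n ≠ 0 ∧ ¬∃ a ∈ S, ∃ b ∈ S, a ≠ 0 ∧ b ≠ 0 ∧ a + b = n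

/-- S is almost symmetric (Nari): F - f ∈ PF(S) for every f ∈ PF(S). -/
def AlmostSym (S : Set ℕ) (F : ℕ) : Prop :=
  ∀ f ∈ PF S, ∃ g ∈ PF S, (g : ℤ) = (F : ℤ) - (f : ℤ)

/-- S is symmetric: PF(S) = {F(S)} (vacuously true when S = ℕ). -/
def IsSym (S : Set ℕ) : Prop := ∀ F, IsFrob S F → PF S = {F}

/-- (f_1,...,f_ν) is an NG-vector for S with minimal generators n_1,...,n_ν. -/
def IsNGVector {ν : ℕ} (S : Set ℕ) (n f : Fin ν → ℕ) : Prop :=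
  ∀ i, f i ∈ PF S ∧ ∀ g ∈ PF S, memZ S ((n i : ℤ) + (f i : ℤ) - (g : ℤ))

/-- S is nearly Gorenstein (generator criterion): for each minimal generator m
there is f ∈ PF(S) with m + f - g ∈ S for all g ∈ PF(S). -/
def NearlyGGen (S : Set ℕ) : Prop :=
  ∀ m, IsMinGen S m → ∃ f ∈ PF S, ∀ g ∈ PF S, memZ S ((m : ℤ) + (f : ℤ) - (g : ℤ))

/-- The canonical ideal K(S) = {z ∈ ℤ : F - z ∉ S}. -/
def Kan (S : Set ℕ) (F : ℕ) : Set ℤ := {z | ¬ memZ S ((F : ℤ) - z)}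

/-- The relative ideal (S - K(S)) = {z ∈ ℤ : z + K(S) ⊆ S}. -/
def SmK (S : Set ℕ) (F : ℕ) : Set ℤ := {z | ∀ k ∈ Kan S F, memZ S (z + k)}

/-- S is nearly Gorenstein: M(S) ⊆ K(S) + (S - K(S)). -/
def NearlyG (S : Set ℕ) (F : ℕ) : Prop :=
  ∀ m ∈ S, m ≠ 0 → ∃ k ∈ Kan S F, ∃ x ∈ SmK S F, k + x = (m : ℤ)

/-! If `n_i + f_i - F = u ∈ S`, then `0 < u < n_i` because `f_i` is a pseudo-Frobenius number
below `F`. Splitting off a minimal generator, `u = n_l + t` with `n_l < n_i`, so `l < i` and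
hence `f_l = F`. The NG-condition at `l` gives `n_l + F - f_i ∈ S`, and
`n_i = (n_l + F - f_i) + t`; minimality of `n_i` forces `t = 0`. -/

lemma IsFrob.mem_PF {S : Set ℕ} {F : ℕ} (hF : IsFrob S F) : F ∈ PF S :=
  ⟨hF.1, fun _ _ hs0 => hF.2 _ (by omega)⟩

lemma IsFrob.le_of_not_mem {S : Set ℕ} {F f : ℕ} (hF : IsFrob S F) (hf : f ∉ S) : f ≤ F := by
  by_contra h
  exact hf (hF.2 f (by omega))

lemma IsMinGen.eq_zero_or_eq_zero {S : Set ℕ} {m a b : ℕ} (hm : IsMinGen S m)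
    (ha : a ∈ S) (hb : b ∈ S) (hab : a + b = m) : a = 0 ∨ b = 0 := by
  by_contra! h
  exact hm.2.2 ⟨a, ha, b, hb, h.1, h.2, hab⟩

lemma IsNumSgp.exists_isMinGen_add {S : Set ℕ} (hS : IsNumSgp S) :
    ∀ s ∈ S, s ≠ 0 → ∃ m, IsMinGen S m ∧ ∃ t ∈ S, m + t = s := by
  intro s
  induction s using Nat.strong_induction_on with
  | _ s ih =>
    intro hs hs0
    by_cases h : ∃ a ∈ S, ∃ b ∈ S, a ≠ 0 ∧ b ≠ 0 ∧ a + b = s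
    · obtain ⟨a, ha, b, hb, ha0, hb0, rfl⟩ := h
      obtain ⟨m, hm, t, ht, rfl⟩ := ih a (by omega) ha ha0
      exact ⟨m, hm, t + b, hS.2.1 t ht b hb, by omega⟩
    · exact ⟨s, ⟨hs, hs0, h⟩, 0, hS.1, rfl⟩

/-- The shift `m + f - F` is positive because `f + m ∈ S` while `F ∉ S`. -/
lemma exists_pos_eq_add_sub_frob {S : Set ℕ} {F f m : ℕ} (hF : IsFrob S F)
    (hf : f ∈ PF S) (hfF : f ≠ F) (hm : IsMinGen S m) (h : memZ S (m + f - F)) :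
    ∃ u ∈ S, 0 < u ∧ u < m ∧ (u : ℤ) = m + f - F := by
  obtain ⟨u, hu, hu_eq⟩ := h
  have hf_le : f ≤ F := hF.le_of_not_mem hf.1
  have hu_pos : u ≠ 0 := by
    rintro rfl
    have hF_eq : F = f + m := by omega
    exact hF.1 (hF_eq ▸ hf.2 m hm.1 hm.2.1)
  exact ⟨u, hu, by omega, by omega, hu_eq⟩

theorem stmt4 (ν : ℕ) (S : Set ℕ) (F : ℕ) (n f : Fin ν → ℕ)
    (hS : IsNumSgp S) (hF : IsFrob S F) (hmono : StrictMono n)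
    (hgen : ∀ m, IsMinGen S m ↔ ∃ i, n i = m)
    (hNG : IsNGVector S n f)
    (i : Fin ν) (hi : f i ≠ F) (hmin : ∀ j, j < i → f j = F) :
    ∃ l, l < i ∧ (f i : ℤ) = (F : ℤ) - (n i : ℤ) + (n l : ℤ) := by
  have hni : IsMinGen S (n i) := (hgen (n i)).2 ⟨i, rfl⟩
  have hfi : f i ∈ PF S := (hNG i).1
  obtain ⟨u, hu, hu_pos, hu_lt, hu_eq⟩ :=
    exists_pos_eq_add_sub_frob hF hfi hi hni ((hNG i).2 F hF.mem_PF)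
  obtain ⟨m, hm, t, ht, rfl⟩ := hS.exists_isMinGen_add u hu hu_pos.ne'
  obtain ⟨l, rfl⟩ := (hgen m).1 hm
  have hli : l < i := hmono.lt_iff_lt.1 (by omega)
  obtain ⟨v, hv, hv_eq⟩ := (hNG l).2 (f i) hfi
  rw [hmin l hli] at hv_eq
  have hfi_le : f i ≤ F := hF.le_of_not_mem hfi.1
  have ht0 : t = 0 := (hni.eq_zero_or_eq_zero hv ht (by omega)).resolve_left (by omega)
  exact ⟨l, hli, by omega⟩
end

section
/- Let S = ⟨n_1, ..., n_ν⟩ be a numerical semigroup that is not symmetric, and let d be a positive integer coprime to n_ν with d > 1. Then T = ⟨dn_1, ..., dn_{ν-1}, n_ν⟩ is not nearly Gorenstein. -/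
/-!
Write N = n_ν, so that T = d·S + ℕ·N. Since gcd(d, N) = 1, reducing modulo d shows that
d·w + r·N with 0 ≤ r < d lies in T exactly when w ∈ S. Hence d·g + (d-1)·N ∈ PF(T) for every
g ∈ PF(S), and N is a minimal generator of T. If f ∈ PF(T) satisfied the nearly Gorenstein
condition at N, then f + N = d·s with s ∈ S, and N + f - (d·g + (d-1)·N) ∈ T forces
f = d·g + (d-1)·N for every g ∈ PF(S). So PF(S) would be a singleton, i.e. S symmetric.
-/

def glue (S : Set ℕ) (d N : ℕ) : Set ℕ := {m | ∃ s ∈ S, ∃ c, m = d * s + c * N}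

lemma memZ_natCast_iff {S : Set ℕ} {m : ℕ} : memZ S m ↔ m ∈ S :=
  ⟨fun ⟨_, hs, h⟩ => Int.ofNat_inj.1 h ▸ hs, fun h => ⟨m, h, rfl⟩⟩

lemma exists_ne_mem_PF_of_not_isSym {S : Set ℕ} (hS : ¬ IsSym S) :
    ∃ f ∈ PF S, ∃ g ∈ PF S, f ≠ g := by
  simp only [IsSym, not_forall] at hS
  obtain ⟨F, hF, hPF⟩ := hS
  have hFPF : F ∈ PF S := ⟨hF.1, fun s _ hs0 => hF.2 _ (by omega)⟩
  by_contra! h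
  exact hPF (Set.eq_singleton_iff_unique_mem.2 ⟨hFPF, fun g hg => (h F hFPF g hg).symm⟩)

lemma glue_setOf_sum {ι : Type*} [Fintype ι] [DecidableEq ι] (n : ι → ℕ) (i : ι) (d : ℕ) :
    glue {m | ∃ c : ι → ℕ, m = ∑ j, c j * n j} d (n i) =
      {m | ∃ c : ι → ℕ, m = ∑ j, c j * if j = i then n j else d * n j} := by
  have key (b : ι → ℕ) (c : ℕ) :
      ∑ j, (if j = i then d * b j + c else b j) * (if j = i then n j else d * n j) =
        d * ∑ j, b j * n j + c * n i := by
    calc _ = ∑ j, (d * (b j * n j) + if j = i then c * n i else 0) := by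
          refine Finset.sum_congr rfl fun j _ => ?_
          split_ifs with h
          · subst h; ring
          · ring
      _ = _ := by rw [Finset.sum_add_distrib, Finset.mul_sum, Finset.sum_ite_eq']; simp
  ext m
  constructor
  · rintro ⟨s, ⟨b, rfl⟩, c, rfl⟩
    exact ⟨_, (key b c).symm⟩
  · rintro ⟨c, rfl⟩
    refine ⟨_, ⟨Function.update c i 0, rfl⟩, c i, ?_⟩
    rw [← key]
    congr 1 with j
    by_cases h : j = i
    · subst h; simp
    · simp [h]

section Glue

variable {S : AddSubmonoid ℕ} {d N : ℕ}

lemma memZ_glue_iff (hN : N ∈ S) (hcop : d.Coprime N) {r : ℕ} (hr : r < d) (w : ℤ) :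
    memZ (glue S d N) (d * w + r * N) ↔ memZ S w := by
  constructor
  · rintro ⟨_, ⟨s, hs, c, rfl⟩, h⟩
    push_cast at h
    obtain ⟨k, hk⟩ : (d : ℤ) ∣ c - r :=
      (Nat.isCoprime_iff_coprime.2 hcop).dvd_of_dvd_mul_right ⟨w - s, by linear_combination h⟩
    have hk0 : 0 ≤ k := by nlinarith
    lift k to ℕ using hk0
    refine ⟨s + k * N, add_mem hs (nsmul_mem hN k), ?_⟩
    have hd : (d : ℤ) ≠ 0 := by exact_mod_cast (by omega : d ≠ 0)
    refine mul_left_cancel₀ hd ?_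
    push_cast
    linear_combination h - N * hk
  · rintro ⟨s, hs, rfl⟩
    exact ⟨d * s + r * N, ⟨s, hs, r, rfl⟩, by push_cast; ring⟩

lemma mem_glue_iff (hN : N ∈ S) (hcop : d.Coprime N) {r : ℕ} (hr : r < d) (w : ℕ) :
    d * w + r * N ∈ glue S d N ↔ w ∈ S := by
  rw [← memZ_natCast_iff, ← SetLike.mem_coe, ← memZ_natCast_iff, ← memZ_glue_iff hN hcop hr]
  push_cast
  rfl

lemma mul_add_pred_mul_mem_PF_glue (hN : N ∈ S) (hN0 : N ≠ 0) (hcop : d.Coprime N)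
    (hd : 0 < d) {g : ℕ} (hg : g ∈ PF S) : d * g + (d - 1) * N ∈ PF (glue S d N) := by
  refine ⟨fun h => hg.1 ((mem_glue_iff hN hcop (by omega) g).1 h), ?_⟩
  rintro _ ⟨s, hs, c, rfl⟩ ht
  rcases eq_or_ne s 0 with rfl | hs0
  · rcases c with _ | c
    · simp at ht
    refine ⟨g + N, hg.2 N hN hN0, c, ?_⟩
    zify [Nat.one_le_iff_ne_zero.2 hd.ne']
    ring
  · exact ⟨g + s, hg.2 s hs hs0, d - 1 + c, by ring⟩

lemma isMinGen_glue (hN0 : N ≠ 0) (hcop : d.Coprime N) (hd : 1 < d) :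
    IsMinGen (glue S d N) N := by
  refine ⟨⟨0, zero_mem S, 1, by ring⟩, hN0, ?_⟩
  rintro ⟨_, ⟨s₁, hs₁, c₁, rfl⟩, _, ⟨s₂, hs₂, c₂, rfl⟩, ha, hb, hab⟩
  have hc₁ : c₁ = 0 := by
    by_contra h
    have := Nat.le_mul_of_pos_left N (Nat.pos_of_ne_zero h)
    omega
  have hc₂ : c₂ = 0 := by
    by_contra h
    have := Nat.le_mul_of_pos_left N (Nat.pos_of_ne_zero h)
    omega
  subst hc₁ hc₂
  have := hcop.eq_one_of_dvd ⟨s₁ + s₂, by rw [← hab]; ring⟩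
  omega

lemma exists_add_eq_mul_of_mem_PF_glue (hN0 : N ≠ 0) {f : ℕ} (hf : f ∈ PF (glue S d N)) :
    ∃ s ∈ S, f + N = d * s := by
  obtain ⟨s, hs, c, h⟩ := hf.2 N ⟨0, zero_mem S, 1, by ring⟩ hN0
  rcases c with _ | c
  · exact ⟨s, hs, by simpa using h⟩
  · exact absurd ⟨s, hs, c, by rw [add_one_mul] at h; omega⟩ hf.1

lemma eq_of_mem_PF_glue (hN : N ∈ S) (hN0 : N ≠ 0) (hcop : d.Coprime N) (hd : 1 < d)
    {f g : ℕ} (hf : f ∈ PF (glue S d N)) (hg : g ∈ PF S)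
    (hmem : memZ (glue S d N) (N + f - ((d * g + (d - 1) * N : ℕ) : ℤ))) :
    f = d * g + (d - 1) * N := by
  obtain ⟨s, hs, hfs⟩ := exists_add_eq_mul_of_mem_PF_glue hN0 hf
  have hfsZ : (f : ℤ) + N = d * s := by exact_mod_cast hfs
  have hshift : (N : ℤ) + f - ((d * g + (d - 1) * N : ℕ) : ℤ) = d * (s - g - N) + (1 : ℕ) * N := by
    push_cast [Nat.one_le_of_lt hd]
    linear_combination hfsZ
  rw [hshift, memZ_glue_iff hN hcop hd] at hmem
  obtain ⟨u, hu, hus⟩ := hmem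
  have hfu : f = d * (g + u) + (d - 1) * N := by
    zify [Nat.one_le_of_lt hd]
    linear_combination hfsZ - d * hus
  rcases eq_or_ne u 0 with rfl | hu0
  · simpa using hfu
  · exact absurd ⟨g + u, hg.2 u hu hu0, d - 1, hfu⟩ hf.1

theorem not_nearlyGGen_glue (hN : N ∈ S) (hN0 : N ≠ 0) (hcop : d.Coprime N) (hd : 1 < d)
    (hS : ¬ IsSym S) : ¬ NearlyGGen (glue S d N) := by
  intro hNG
  obtain ⟨f, hf, g, hg, hfg⟩ := exists_ne_mem_PF_of_not_isSym hS
  obtain ⟨t, ht, hNt⟩ := hNG N (isMinGen_glue hN0 hcop hd)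
  have htf := eq_of_mem_PF_glue hN hN0 hcop hd ht hf
    (hNt _ (mul_add_pred_mul_mem_PF_glue hN hN0 hcop (by omega) hf))
  have htg := eq_of_mem_PF_glue hN hN0 hcop hd ht hg
    (hNt _ (mul_add_pred_mul_mem_PF_glue hN hN0 hcop (by omega) hg))
  exact hfg (Nat.eq_of_mul_eq_mul_left (by omega) (Nat.add_right_cancel (htf.symm.trans htg)))

end Glue

theorem stmt13 (ν : ℕ) (hν : 0 < ν) (S : Set ℕ) (n : Fin ν → ℕ)
    (hS : IsNumSgp S)
    (hgen : S = {m : ℕ | ∃ c : Fin ν → ℕ, m = ∑ j, c j * n j})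
    (hmin : ∀ i, IsMinGen S (n i))
    (hns : ¬ IsSym S)
    (d : ℕ) (hd : 1 < d) (hcop : Nat.Coprime d (n ⟨ν - 1, by omega⟩)) :
    ¬ NearlyGGen {m : ℕ | ∃ c : Fin ν → ℕ,
        m = ∑ j, c j * (if (j : ℕ) = ν - 1 then n j else d * n j)} := by
  set last : Fin ν := ⟨ν - 1, by omega⟩
  obtain ⟨h0, hadd, -⟩ := hS
  let S' : AddSubmonoid ℕ :=
    { carrier := S, add_mem' := fun ha hb => hadd _ ha _ hb, zero_mem' := h0 }
  have hT : {m : ℕ | ∃ c : Fin ν → ℕ,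
      m = ∑ j, c j * (if (j : ℕ) = ν - 1 then n j else d * n j)} = glue S' d (n last) := by
    have hlast (j : Fin ν) : (j : ℕ) = ν - 1 ↔ j = last := by simp [last, Fin.ext_iff]
    simp only [hlast]
    exact (hgen ▸ glue_setOf_sum n last d).symm
  rw [hT]
  exact not_nearlyGGen_glue (hmin last).1 (hmin last).2.1 hcop hd hns
end
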